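/- Let r, r̂_V, μ̂ ∈ ℝ, σ > 0, s > 0, 𝒯 > 0, and set ν₁ := (μ̂ − r + σ²/2)/σ, ν₂ := ν₁ − σ. Assume r̂_V ≠ μ̂, r̂_V ≠ r, and c := 2(r̂_V − μ̂) + ν₁² > 0 (equivalently c = 2(r̂_V − r) + ν₂²). Then ∫_0^𝒯 e^{−r̂_V w} BS_P(s, s e^{r w}, w) dw = s ( Υ₀(𝒯, r̂_V − r, −ν₂) − Υ₀(𝒯, r̂_V − μ̂, −ν₁) ), where BS_P is the Black–Scholes put function with drift m = μ̂ and volatility σ. (This identity evaluates the put-recovery integral in the forward valuation at the at-the-money risk-free strike.) -/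

import Mathlib

open MeasureTheory intervalIntegral Real ProbabilityTheory Filter Asymptotics

/-- The standard Gaussian measure on ℝ. -/
noncomputable def gaussMeasure : Measure ℝ := gaussianReal 0 1

/-- The standard normal CDF. -/
noncomputable def Phi (x : ℝ) : ℝ :=
  ∫ u in Set.Iic x, Real.exp (-u ^ 2 / 2) / Real.sqrt (2 * Real.pi)

/-- The standard normal density. -/
noncomputable def gaussPdf (x : ℝ) : ℝ := Real.exp (-x ^ 2 / 2) / Real.sqrt (2 * Real.pi)

/-- Black–Scholes `d₁` with volatility `σ` and drift `m`. -/
noncomputable def d1 (σ m s k t : ℝ) : ℝ :=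
  (Real.log (s / k) + (m + σ ^ 2 / 2) * t) / (σ * Real.sqrt t)

/-- Black–Scholes `d₂` with volatility `σ` and drift `m`. -/
noncomputable def d2 (σ m s k t : ℝ) : ℝ := d1 σ m s k t - σ * Real.sqrt t

/-- Black–Scholes call price (undiscounted) with volatility `σ` and drift `m`. -/
noncomputable def BSC (σ m s k t : ℝ) : ℝ :=
  s * Real.exp (m * t) * Phi (d1 σ m s k t) - k * Phi (d2 σ m s k t)

/-- Black–Scholes put price (undiscounted) with volatility `σ` and drift `m`. -/
noncomputable def BSP (σ m s k t : ℝ) : ℝ :=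
  k * Phi (-d2 σ m s k t) - s * Real.exp (m * t) * Phi (-d1 σ m s k t)

/-- The function `Υ₀` from the ATM forward valuation formula. -/
noncomputable def Ups0 (t x y : ℝ) : ℝ :=
  y / (x * Real.sqrt (2 * x + y ^ 2)) * (Phi (Real.sqrt ((2 * x + y ^ 2) * t)) - 1 / 2)
    - 1 / x * (Real.exp (-x * t) * Phi (y * Real.sqrt t) - 1 / 2)

/-- The second-order approximation `Υ̃` of the generalized `Υ` function. -/
noncomputable def UpsTilde (t x y z : ℝ) : ℝ :=
  Ups0 t x y
    + 2 / Real.sqrt (2 * x + y ^ 2) * (Phi (Real.sqrt ((2 * x + y ^ 2) * t)) - 1 / 2)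
      * (z - y / 2 * z ^ 2)

/-- Covariance of two real random variables. -/
noncomputable def cov {Ω : Type*} [MeasurableSpace Ω] (P : Measure Ω) (X Y : Ω → ℝ) : ℝ :=
  (∫ ω, X ω * Y ω ∂P) - (∫ ω, X ω ∂P) * (∫ ω, Y ω ∂P)

/-- Variance of a real random variable. -/
noncomputable def var {Ω : Type*} [MeasurableSpace Ω] (P : Measure Ω) (X : Ω → ℝ) : ℝ :=
  cov P X X

/-- Correlation of two real random variables. -/
noncomputable def corr {Ω : Type*} [MeasurableSpace Ω] (P : Measure Ω) (X Y : Ω → ℝ) : ℝ :=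
  cov P X Y / Real.sqrt (var P X * var P Y)

/-! At the forward strike `k = s e^{rw}` one has `d₁ = ν₁√w` and `d₂ = ν₂√w`, so the discounted
put becomes `s (e^{-(r̂_V - r)w} Φ(-ν₂√w) - e^{-(r̂_V - μ̂)w} Φ(-ν₁√w))`. Each term integrates
to a `Υ₀`, because `Υ₀(·, x, y)` vanishes at `0` and is an antiderivative of `e^{-xt} Φ(y√t)`:
with `c = 2x + y²` the Gaussian density satisfies `φ(√(ct)) = e^{-xt} φ(y√t)`, which makes the
derivative of the `Φ(√(ct))` term cancel the density term of the product rule. -/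

open Set

lemma gaussPdf_eq_gaussianPDFReal : gaussPdf = gaussianPDFReal 0 1 := by
  ext x
  simp [gaussPdf, gaussianPDFReal, div_eq_inv_mul]

lemma continuous_gaussPdf : Continuous gaussPdf := by
  unfold gaussPdf; fun_prop

lemma integrable_gaussPdf : Integrable gaussPdf := by
  rw [gaussPdf_eq_gaussianPDFReal]; exact integrable_gaussianPDFReal 0 1

lemma integral_gaussPdf : ∫ u, gaussPdf u = 1 := by
  rw [gaussPdf_eq_gaussianPDFReal]; exact integral_gaussianPDFReal_eq_one 0 one_ne_zero

lemma Phi_eq_setIntegral_gaussPdf (x : ℝ) : Phi x = ∫ u in Iic x, gaussPdf u := rfl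

lemma hasDerivAt_Phi (x : ℝ) : HasDerivAt Phi (gaussPdf x) x := by
  have hPhi : ∀ y, Phi 0 + ∫ u in (0 : ℝ)..y, gaussPdf u = Phi y := fun y => by
    rw [← integral_Iic_sub_Iic integrable_gaussPdf.integrableOn integrable_gaussPdf.integrableOn,
      Phi_eq_setIntegral_gaussPdf, Phi_eq_setIntegral_gaussPdf, add_sub_cancel]
  have := (integral_hasDerivAt_right (continuous_gaussPdf.intervalIntegrable 0 x)
    (continuous_gaussPdf.stronglyMeasurableAtFilter _ _) continuous_gaussPdf.continuousAt).const_add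
    (Phi 0)
  simpa only [hPhi] using this

@[fun_prop]
lemma continuous_Phi : Continuous Phi :=
  continuous_iff_continuousAt.2 fun x => (hasDerivAt_Phi x).continuousAt

lemma Phi_zero : Phi 0 = 1 / 2 := by
  have hsymm : ∫ u in Ioi (0 : ℝ), gaussPdf u = Phi 0 := by
    rw [Phi_eq_setIntegral_gaussPdf, ← neg_zero, ← integral_comp_neg_Iic]
    simp [gaussPdf]
  have := integral_Iic_add_Ioi (b := 0) integrable_gaussPdf.integrableOn
    integrable_gaussPdf.integrableOn
  rw [integral_gaussPdf, hsymm, ← Phi_eq_setIntegral_gaussPdf] at this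
  linarith

lemma gaussPdf_sqrt_mul_sqrt (x y t : ℝ) (hc : 0 ≤ 2 * x + y ^ 2) (ht : 0 ≤ t) :
    gaussPdf (√(2 * x + y ^ 2) * √t) = exp (-x * t) * gaussPdf (y * √t) := by
  rw [gaussPdf, gaussPdf, mul_pow, mul_pow, sq_sqrt hc, sq_sqrt ht, ← mul_div_assoc, ← exp_add]
  ring_nf

lemma hasDerivAt_Ups0 (x y t : ℝ) (hx : x ≠ 0) (hc : 0 < 2 * x + y ^ 2) (ht : 0 < t) :
    HasDerivAt (fun t => Ups0 t x y) (exp (-x * t) * Phi (y * √t)) t := by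
  set c := 2 * x + y ^ 2
  have hPhi (a : ℝ) :
      HasDerivAt (fun t => Phi (a * √t)) (gaussPdf (a * √t) * (a * (1 / (2 * √t)))) t :=
    (hasDerivAt_Phi _).comp t ((hasDerivAt_sqrt ht.ne').const_mul a)
  have hexp : HasDerivAt (fun t => exp (-x * t)) (exp (-x * t) * -x) t := by
    simpa using ((hasDerivAt_id t).const_mul (-x)).exp
  have hUps0 : (fun t => Ups0 t x y) = fun t => y / (x * √c) * (Phi (√c * √t) - 1 / 2)
      - 1 / x * (exp (-x * t) * Phi (y * √t) - 1 / 2) := by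
    ext t; rw [Ups0, sqrt_mul hc.le]
  rw [hUps0]
  refine ((((hPhi √c).sub_const _).const_mul _).sub
    (((hexp.mul (hPhi y)).sub_const _).const_mul _)).congr_deriv ?_
  rw [gaussPdf_sqrt_mul_sqrt x y t hc.le ht.le]
  have : √c ≠ 0 := (sqrt_pos.2 hc).ne'
  have : √t ≠ 0 := (sqrt_pos.2 ht).ne'
  field_simp
  ring

lemma Ups0_zero (x y : ℝ) : Ups0 0 x y = 0 := by
  simp [Ups0, Phi_zero]

lemma integral_exp_mul_Phi (x y T : ℝ) (hx : x ≠ 0) (hc : 0 < 2 * x + y ^ 2) (hT : 0 ≤ T) :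
    ∫ w in (0 : ℝ)..T, exp (-x * w) * Phi (y * √w) = Ups0 T x y := by
  have hcont : Continuous fun T => Ups0 T x y := by unfold Ups0; fun_prop
  rw [integral_eq_sub_of_hasDeriv_right_of_le hT hcont.continuousOn
    (fun t ht => (hasDerivAt_Ups0 x y t hx hc ht.1).hasDerivWithinAt)
    (by apply Continuous.intervalIntegrable; fun_prop), Ups0_zero, sub_zero]

section ForwardStrike

variable {σ m r s w ν₁ ν₂ : ℝ}

lemma d1_forward_strike (hs : s ≠ 0) (hw : 0 ≤ w) (hν₁ : ν₁ = (m - r + σ ^ 2 / 2) / σ) :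
    d1 σ m s (s * exp (r * w)) w = ν₁ * √w := by
  have hlog : log (s / (s * exp (r * w))) = -(r * w) := by
    rw [div_mul_cancel_left₀ hs, log_inv, log_exp]
  obtain ⟨u, hu, rfl⟩ : ∃ u, 0 ≤ u ∧ w = u ^ 2 := ⟨√w, sqrt_nonneg w, (sq_sqrt hw).symm⟩
  rw [d1, hlog, hν₁, sqrt_sq hu]
  rcases eq_or_ne σ 0 with rfl | hσ
  · simp
  rcases eq_or_ne u 0 with rfl | hu0
  · simp
  field_simp
  ring

lemma d2_forward_strike (hs : s ≠ 0) (hw : 0 ≤ w) (hν₁ : ν₁ = (m - r + σ ^ 2 / 2) / σ)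
    (hν₂ : ν₂ = ν₁ - σ) : d2 σ m s (s * exp (r * w)) w = ν₂ * √w := by
  rw [d2, d1_forward_strike hs hw hν₁, hν₂, sub_mul]

lemma BSP_forward_strike (hs : s ≠ 0) (hw : 0 ≤ w) (hν₁ : ν₁ = (m - r + σ ^ 2 / 2) / σ)
    (hν₂ : ν₂ = ν₁ - σ) :
    BSP σ m s (s * exp (r * w)) w
      = s * (exp (r * w) * Phi (-ν₂ * √w) - exp (m * w) * Phi (-ν₁ * √w)) := by
  rw [BSP, d1_forward_strike hs hw hν₁, d2_forward_strike hs hw hν₁ hν₂, neg_mul, neg_mul]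
  ring

end ForwardStrike

/-- The put-recovery integral in the forward valuation at the at-the-money
risk-free strike, in terms of `Υ₀`. -/
theorem put_recovery_integral_ATMRF
    (r rV μ σ s 𝒯 : ℝ) (hσ : 0 < σ) (hs : 0 < s) (hT : 0 < 𝒯)
    (ν1 ν2 : ℝ) (hν1 : ν1 = (μ - r + σ ^ 2 / 2) / σ) (hν2 : ν2 = ν1 - σ)
    (h1 : rV ≠ μ) (h2 : rV ≠ r) (hc : 0 < 2 * (rV - μ) + ν1 ^ 2) :
    ∫ w in (0 : ℝ)..𝒯, Real.exp (-rV * w) * BSP σ μ s (s * Real.exp (r * w)) w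
      = s * (Ups0 𝒯 (rV - r) (-ν2) - Ups0 𝒯 (rV - μ) (-ν1)) := by
  have hc_eq : 2 * (rV - r) + ν2 ^ 2 = 2 * (rV - μ) + ν1 ^ 2 := by
    subst hν1 hν2; field_simp; ring
  have hc₁ : 0 < 2 * (rV - μ) + (-ν1) ^ 2 := by rwa [neg_sq]
  have hc₂ : 0 < 2 * (rV - r) + (-ν2) ^ 2 := by rwa [neg_sq, hc_eq]
  have hintegrand : EqOn (fun w => exp (-rV * w) * BSP σ μ s (s * exp (r * w)) w)
      (fun w => s * (exp (-(rV - r) * w) * Phi (-ν2 * √w)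
        - exp (-(rV - μ) * w) * Phi (-ν1 * √w)))
      (uIcc 0 𝒯) := fun w hw => by
    dsimp only
    rw [BSP_forward_strike hs.ne' (uIcc_of_le hT.le ▸ hw).1 hν1 hν2,
      show -(rV - r) * w = -rV * w + r * w by ring, show -(rV - μ) * w = -rV * w + μ * w by ring,
      exp_add, exp_add]
    ring
  have hint (x y : ℝ) :
      IntervalIntegrable (fun w => exp (-x * w) * Phi (y * √w)) volume 0 𝒯 := by
    apply Continuous.intervalIntegrable; fun_prop
  rw [integral_congr hintegrand, intervalIntegral.integral_const_mul,
    integral_sub (hint _ _) (hint _ _),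
    integral_exp_mul_Phi _ _ _ (sub_ne_zero.2 h2) hc₂ hT.le,
    integral_exp_mul_Phi _ _ _ (sub_ne_zero.2 h1) hc₁ hT.le]
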